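/- Let B > 0 and a ∈ ℝ, set λ_k = (kπ/B)², σ_k = a − λ_k, and C_Γ = Γ(4/3)/Γ(2/3) (Euler Gamma function). Then there exists a constant C > 0 (depending only on a and B) such that for every integer k ≥ 1 with λ_k ≥ 2|a| and every nonzero real τ, the multiplier M(k,τ) = (iτ)^{4/3} / ((iτ)^{2/3} − C_Γ σ_k) (principal-branch powers) satisfies |M(k,τ)| ≤ C |τ|^{4/3} / (|τ|^{2/3} + k²). -/

import Mathlib

/-!
On the imaginary axis `arg (iτ) = ±π/2`, so the denominator has real part
`|τ|^{2/3} cos (π/3) - C_Γ σ_k = |τ|^{2/3}/2 + C_Γ (λ_k - a)`. When `λ_k ≥ 2|a|` the second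
term is at least `C_Γ λ_k / 2`, a multiple of `k²`, so the modulus of the denominator is at least a
constant multiple of `|τ|^{2/3} + k²`, while the numerator has modulus `|τ|^{4/3}`.
-/

open Complex Real

namespace Complex

lemma abs_arg_I_mul_ofReal {τ : ℝ} (hτ : τ ≠ 0) : |arg (I * τ)| = π / 2 := by
  rcases hτ.lt_or_gt with h | h
  · rw [arg_eq_neg_pi_div_two_iff.mpr (by simp [h]), abs_neg, abs_of_pos (by positivity)]
  · rw [arg_eq_pi_div_two_iff.mpr (by simp [h]), abs_of_pos (by positivity)]

lemma re_I_mul_ofReal_cpow {τ : ℝ} (hτ : τ ≠ 0) (p : ℝ) :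
    ((I * τ) ^ (p : ℂ)).re = |τ| ^ p * Real.cos (p * (π / 2)) := by
  rw [cpow_ofReal_re, norm_mul, norm_I, one_mul, norm_real, Real.norm_eq_abs,
    ← Real.cos_abs, abs_mul, abs_arg_I_mul_ofReal hτ, ← Real.cos_abs (p * (π / 2)), abs_mul,
    abs_of_pos pi_div_two_pos, mul_comm (π / 2)]

lemma norm_I_mul_ofReal_cpow (τ p : ℝ) : ‖(I * τ) ^ (p : ℂ)‖ = |τ| ^ p := by
  rw [norm_cpow_real, norm_mul, norm_I, one_mul, norm_real, Real.norm_eq_abs]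

end Complex

lemma re_I_mul_ofReal_cpow_two_div_three {τ : ℝ} (hτ : τ ≠ 0) :
    ((I * τ) ^ ((2 : ℂ) / 3)).re = |τ| ^ ((2 : ℝ) / 3) / 2 := by
  have h := re_I_mul_ofReal_cpow hτ (2 / 3)
  rw [show (2 / 3 : ℝ) * (π / 2) = π / 3 by ring, Real.cos_pi_div_three] at h
  push_cast at h
  rw [h, mul_one_div]

lemma norm_I_mul_ofReal_cpow_four_div_three (τ : ℝ) :
    ‖(I * τ) ^ ((4 : ℂ) / 3)‖ = |τ| ^ ((4 : ℝ) / 3) := by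
  have h := norm_I_mul_ofReal_cpow τ (4 / 3)
  push_cast at h
  exact h

lemma add_le_norm_cpow_two_div_three_sub {B a c κ τ : ℝ} (hc : 0 ≤ c) (hτ : τ ≠ 0)
    (hκ : 2 * |a| ≤ (κ * π / B) ^ 2) :
    |τ| ^ ((2 : ℝ) / 3) / 2 + c * π ^ 2 / (2 * B ^ 2) * κ ^ 2 ≤
      ‖(I * τ) ^ ((2 : ℂ) / 3) - ((c * (a - (κ * π / B) ^ 2) : ℝ) : ℂ)‖ := by
  have ha : (κ * π / B) ^ 2 / 2 ≤ (κ * π / B) ^ 2 - a := by linarith [le_abs_self a]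
  calc |τ| ^ ((2 : ℝ) / 3) / 2 + c * π ^ 2 / (2 * B ^ 2) * κ ^ 2
      = |τ| ^ ((2 : ℝ) / 3) / 2 + c * ((κ * π / B) ^ 2 / 2) := by
        rcases eq_or_ne B 0 with rfl | hB
        · simp
        · field_simp
    _ ≤ |τ| ^ ((2 : ℝ) / 3) / 2 + c * ((κ * π / B) ^ 2 - a) := by gcongr
    _ = ((I * τ) ^ ((2 : ℂ) / 3) - ((c * (a - (κ * π / B) ^ 2) : ℝ) : ℂ)).re := by
        rw [sub_re, ofReal_re, re_I_mul_ofReal_cpow_two_div_three hτ]; ring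
    _ ≤ _ := re_le_norm _

/-- Multiplier bound for the inverse boundary operator: with `λ_k = (kπ/B)²`,
`σ_k = a − λ_k` and `C_Γ = Γ(4/3)/Γ(2/3)`, there exists `C > 0` such that for every `k ≥ 1`
with `λ_k ≥ 2|a|` and every nonzero real `τ`, the multiplier
`M(k,τ) = (iτ)^{4/3} / ((iτ)^{2/3} − C_Γ σ_k)` satisfies
`|M(k,τ)| ≤ C |τ|^{4/3} / (|τ|^{2/3} + k²)`. -/
theorem multiplier_bound (B a : ℝ) (hB : 0 < B) :
    ∃ C > 0, ∀ k : ℕ, 1 ≤ k → 2 * |a| ≤ ((k : ℝ) * Real.pi / B) ^ 2 → ∀ τ : ℝ, τ ≠ 0 →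
      ‖(Complex.I * (τ : ℂ)) ^ ((4 : ℂ) / 3) /
          ((Complex.I * (τ : ℂ)) ^ ((2 : ℂ) / 3) -
            ((Real.Gamma (4 / 3) / Real.Gamma (2 / 3) *
              (a - ((k : ℝ) * Real.pi / B) ^ 2) : ℝ) : ℂ))‖ ≤
        C * |τ| ^ ((4 : ℝ) / 3) / (|τ| ^ ((2 : ℝ) / 3) + (k : ℝ) ^ 2) := by
  set C_Γ := Real.Gamma (4 / 3) / Real.Gamma (2 / 3)
  have hC_Γ : 0 < C_Γ := div_pos (Gamma_pos_of_pos (by norm_num)) (Gamma_pos_of_pos (by norm_num))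
  set c : ℝ := min (1 / 2) (C_Γ * π ^ 2 / (2 * B ^ 2))
  have hc : 0 < c := lt_min (by norm_num) (by positivity)
  refine ⟨c⁻¹, inv_pos.mpr hc, fun k _ hk τ hτ => ?_⟩
  set S := |τ| ^ ((2 : ℝ) / 3) + (k : ℝ) ^ 2
  have hden : c * S ≤
      ‖(I * τ) ^ ((2 : ℂ) / 3) - ((C_Γ * (a - (k * π / B) ^ 2) : ℝ) : ℂ)‖ := by
    calc c * S ≤ 1 / 2 * |τ| ^ ((2 : ℝ) / 3) + C_Γ * π ^ 2 / (2 * B ^ 2) * (k : ℝ) ^ 2 := by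
          rw [mul_add]
          gcongr
          exacts [min_le_left _ _, min_le_right _ _]
      _ ≤ _ := by
          rw [one_div_mul_eq_div]
          exact add_le_norm_cpow_two_div_three_sub hC_Γ.le hτ hk
  rw [norm_div, norm_I_mul_ofReal_cpow_four_div_three]
  calc |τ| ^ ((4 : ℝ) / 3) / _ ≤ |τ| ^ ((4 : ℝ) / 3) / (c * S) :=
        div_le_div_of_nonneg_left (by positivity) (by positivity) hden
    _ = c⁻¹ * |τ| ^ ((4 : ℝ) / 3) / S := by field_simp
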